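/- Let (a_s) be a finitely supported sequence of integers indexed by s ≥ 0, let σ be an even integer, and suppose (-1)^{s+σ/2}(t_s - δ(σ,s)) ≤ 0 for all s ≥ 0, where t_s = Σ_{j≥1} j·a_{s+j} and δ(σ,s) = max(0, ⌈(|σ|-2s)/4⌉). Then (-1)^{s+σ/2} a_s ≥ 0 for all s ≥ 1; that is, the coefficient sign alternation follows from the torsion-coefficient inequalities. -/

import Mathlib

/-!
Since `aₛ₊₁ = tₛ - 2tₛ₊₁ + tₛ₊₂`, multiplying by the sign `εₛ₊₁ = (-1)^(s+1+σ/2)` and using the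
alternation `εₛ = εₛ₊₂ = -εₛ₊₁` turns the three hypotheses `εₖ (tₖ - δₖ) ≤ 0` into
`εₛ₊₁ aₛ₊₁ ≥ εₛ₊₁ (δₛ - 2δₛ₊₁ + δₛ₊₂)`. For even `σ`, `δ(σ, k) = max(0, ⌈(|σ/2| - k)/2⌉)` is a
staircase whose second difference vanishes or equals `εₛ₊₁`, so the right-hand side is `≥ 0`.
-/

/-- `δ(σ,s) = max(0, ⌈(|σ| - 2|s|)/4⌉)`. -/
def delta (σ s : ℤ) : ℤ := max 0 ⌈((|σ| - 2 * |s| : ℤ) : ℚ) / 4⌉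

open Finset

def torsionCoeff {R : Type*} [Ring R] (a : ℕ → R) (N s : ℕ) : R :=
  ∑ j ∈ Icc 1 N, (j : R) * a (s + j)

section TorsionCoeff

variable {R : Type*} [Ring R] {a : ℕ → R} {N : ℕ}

lemma torsionCoeff_eq_sum_range (s : ℕ) :
    torsionCoeff a N s = ∑ k ∈ range N, ((k : R) + 1) * a (s + (k + 1)) := by
  rw [torsionCoeff, ← Ico_add_one_right_eq_Icc, sum_Ico_eq_sum_range, Nat.add_sub_cancel]
  refine sum_congr rfl fun k _ => ?_
  rw [add_comm 1 k, Nat.cast_succ]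

lemma sum_range_shift_of_eq_zero {f : ℕ → R} (hf : f N = 0) :
    ∑ k ∈ range N, f (k + 1) = ∑ k ∈ range N, f k - f 0 := by
  rw [eq_sub_iff_add_eq, ← sum_range_succ', sum_range_succ, hf, add_zero]

variable (hsupp : ∀ s, N ≤ s → a s = 0)
include hsupp

lemma torsionCoeff_sub_torsionCoeff_succ (s : ℕ) :
    torsionCoeff a N s - torsionCoeff a N (s + 1) = ∑ k ∈ range N, a (s + 1 + k) := by
  have hshift := sum_range_shift_of_eq_zero (N := N) (f := fun k => (k : R) * a (s + 1 + k))
    (by simp [hsupp (s + 1 + N) (by omega)])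
  simp only [Nat.cast_zero, zero_mul, sub_zero, Nat.cast_succ] at hshift
  rw [torsionCoeff_eq_sum_range, torsionCoeff_eq_sum_range, hshift, ← sum_sub_distrib]
  refine sum_congr rfl fun k _ => ?_
  rw [show s + (k + 1) = s + 1 + k by omega, add_mul, one_mul, add_sub_cancel_left]

lemma torsionCoeff_second_diff (s : ℕ) :
    torsionCoeff a N s - 2 * torsionCoeff a N (s + 1) + torsionCoeff a N (s + 2) = a (s + 1) := by
  have h₀ := torsionCoeff_sub_torsionCoeff_succ hsupp s
  have h₁ := torsionCoeff_sub_torsionCoeff_succ hsupp (s + 1)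
  have hshift := sum_range_shift_of_eq_zero (N := N) (f := fun k => a (s + 1 + k))
    (hsupp (s + 1 + N) (by omega))
  simp only [add_zero, ← add_assoc] at hshift
  simp only [Nat.add_right_comm (s + 1) 1, hshift] at h₁
  calc torsionCoeff a N s - 2 * torsionCoeff a N (s + 1) + torsionCoeff a N (s + 1 + 1)
      = (torsionCoeff a N s - torsionCoeff a N (s + 1))
        - (torsionCoeff a N (s + 1) - torsionCoeff a N (s + 1 + 1)) := by rw [two_mul]; abel
    _ = a (s + 1) := by rw [h₀, h₁, sub_sub_cancel]

end TorsionCoeff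

lemma neg_one_zpow_mul_second_diff_nonneg {K : Type*} [Field K] [LinearOrder K]
    [IsStrictOrderedRing K] {t d : ℕ → K} {c : ℤ}
    (h : ∀ k : ℕ, (-1 : K) ^ ((k : ℤ) + c) * (t k - d k) ≤ 0) (n : ℕ)
    (hd : 0 ≤ (-1 : K) ^ ((n : ℤ) + 1 + c) * (d n - 2 * d (n + 1) + d (n + 2))) :
    0 ≤ (-1 : K) ^ ((n : ℤ) + 1 + c) * (t n - 2 * t (n + 1) + t (n + 2)) := by
  have hε₁ : (-1 : K) ^ ((n : ℤ) + 1 + c) = -(-1) ^ ((n : ℤ) + c) := by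
    rw [add_right_comm, zpow_add_one₀ (by norm_num)]; ring
  have hε₂ : (-1 : K) ^ ((n : ℤ) + 2 + c) = (-1) ^ ((n : ℤ) + c) := by
    rw [add_right_comm, zpow_add₀ (by norm_num)]; norm_num
  have h₀ := h n
  have h₁ := h (n + 1)
  have h₂ := h (n + 2)
  push_cast at h₁ h₂
  rw [hε₁] at h₁ hd ⊢
  rw [hε₂] at h₂
  linarith

-- `Int` division rounds down, so `-((-x) / 4) = ⌈x / 4⌉`.
lemma delta_natCast_eq (σ : ℤ) (k : ℕ) :
    delta σ k = max 0 (-((2 * k - max σ (-σ)) / 4)) := by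
  rw [delta, show (4 : ℚ) = ((4 : ℕ) : ℚ) by norm_num, Rat.ceil_intCast_div_natCast,
    Nat.abs_cast, abs_eq_max_neg]
  simp

lemma neg_one_zpow_mul_delta_second_diff_nonneg {σ : ℤ} (hσ : Even σ) (n : ℕ) :
    0 ≤ (-1 : ℚ) ^ ((n : ℤ) + 1 + σ / 2) *
      (delta σ n - 2 * delta σ (n + 1 : ℕ) + delta σ (n + 2 : ℕ)) := by
  have h₀ := delta_natCast_eq σ n
  have h₁ := delta_natCast_eq σ (n + 1)
  have h₂ := delta_natCast_eq σ (n + 2)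
  push_cast at h₁ h₂ ⊢
  obtain ⟨c, rfl⟩ := hσ
  obtain ⟨k, hk | hk⟩ := Int.even_or_odd' ((n : ℤ) + 1 + (c + c) / 2)
  · rw [Even.neg_one_zpow ⟨k, by rw [hk, two_mul]⟩, one_mul]
    exact_mod_cast (by omega : (0 : ℤ) ≤
      delta (c + c) n - 2 * delta (c + c) (n + 1) + delta (c + c) (n + 2))
  · rw [Odd.neg_one_zpow ⟨k, hk⟩, neg_one_mul, neg_nonneg]
    exact_mod_cast (by omega :
      delta (c + c) n - 2 * delta (c + c) (n + 1) + delta (c + c) (n + 2) ≤ 0)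

/-- The torsion-coefficient inequalities `(-1)^(s+σ/2)(t_s - δ(σ,s)) ≤ 0` for a finitely
supported integer sequence `(a_s)` imply the Crowell–Murasugi sign alternation
`(-1)^(s+σ/2) a_s ≥ 0` for all `s ≥ 1`. -/
theorem sign_alternation_of_torsion_inequalities
    (a : ℕ → ℤ) (N : ℕ) (hsupp : ∀ s : ℕ, N ≤ s → a s = 0)
    (σ : ℤ) (hσ : Even σ)
    (t : ℕ → ℤ) (ht : ∀ s : ℕ, t s = ∑ j ∈ Finset.Icc 1 N, (j : ℤ) * a (s + j))
    (h : ∀ s : ℕ, (-1 : ℚ) ^ ((s : ℤ) + σ / 2) * ((t s : ℚ) - (delta σ (s : ℤ) : ℚ)) ≤ 0) :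
    ∀ s : ℕ, 1 ≤ s → 0 ≤ (-1 : ℚ) ^ ((s : ℤ) + σ / 2) * (a s : ℚ) := by
  intro s hs
  obtain ⟨n, rfl⟩ := Nat.exists_eq_add_of_le' hs
  have ht' : ∀ k, t k = torsionCoeff a N k := ht
  have ha : (a (n + 1) : ℚ) = t n - 2 * t (n + 1) + t (n + 2) := by
    rw [ht', ht', ht', ← torsionCoeff_second_diff hsupp n]
    push_cast
    ring
  rw [ha, Nat.cast_succ]
  exact neg_one_zpow_mul_second_diff_nonneg (t := fun k => (t k : ℚ))
    (d := fun k => (delta σ k : ℚ)) h n (neg_one_zpow_mul_delta_second_diff_nonneg hσ n)
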